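/- arXiv:2404.07059 — 10 statements merged into one kernel-verified Lean document; each statement's English description precedes it below -/
import Mathlib

section
/- For real numbers a ≥ b > 0 and real p ≥ 2, we have (a+b)^p ≥ a^p + p·a^(p-1)·b + b^p. -/
theorem power_sum_ineq (a b p : ℝ) (hb : 0 < b) (hab : b ≤ a) (hp : 2 ≤ p) :
    (a + b) ^ p ≥ a ^ p + p * a ^ (p - 1) * b + b ^ p := by
  have ha : 0 < a := lt_of_lt_of_le hb hab
  have hp1 : 1 ≤ p - 1 := by linarith
  have hp0 : (0:ℝ) < p := by linarith
  set g : ℝ → ℝ := fun x => (a + x) ^ p - x ^ p - p * a ^ (p - 1) * x with hg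
  have hderiv : ∀ x ∈ Set.Ioo (0:ℝ) b, HasDerivAt g
      (p * (a + x) ^ (p - 1) * 1 - p * x ^ (p - 1) - p * a ^ (p - 1)) x := by
    intro x hx
    have hax : a + x ≠ 0 := by nlinarith [hx.1]
    have h1 : HasDerivAt (fun x : ℝ => (a + x) ^ p) (p * (a + x) ^ (p - 1) * 1) x := by
      have := (Real.hasDerivAt_rpow_const (x := a + x) (p := p) (Or.inl hax)).comp x
        ((hasDerivAt_id x).const_add a)
      simpa [Function.comp_def] using this
    have h2 : HasDerivAt (fun x : ℝ => x ^ p) (p * x ^ (p - 1)) x :=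
      Real.hasDerivAt_rpow_const (Or.inl (ne_of_gt hx.1))
    have h3 : HasDerivAt (fun x : ℝ => p * a ^ (p - 1) * x) (p * a ^ (p - 1)) x := by
      simpa using (hasDerivAt_id x).const_mul (p * a ^ (p - 1))
    exact (h1.sub h2).sub h3
  have hcont : ContinuousOn g (Set.Icc 0 b) := by
    apply ContinuousOn.sub
    apply ContinuousOn.sub
    · intro x hx
      have hax : a + x ≠ 0 := by
        have := hx.1; simp at this ⊢; nlinarith
      exact ((Real.continuousAt_rpow_const (a + x) p (Or.inl hax)).comp
        ((continuous_const.add continuous_id).continuousAt)).continuousWithinAt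
    · intro x hx
      exact (Real.continuousAt_rpow_const x p (Or.inr hp0.le)).continuousWithinAt
    · exact (continuous_const.mul continuous_id).continuousOn
  have hmono : MonotoneOn g (Set.Icc 0 b) := by
    apply monotoneOn_of_deriv_nonneg (convex_Icc 0 b) hcont
    · intro x hx
      rw [interior_Icc] at hx
      exact (hderiv x hx).differentiableAt.differentiableWithinAt
    · intro x hx
      rw [interior_Icc] at hx
      rw [(hderiv x hx).deriv]
      have key : a ^ (p - 1) + x ^ (p - 1) ≤ (a + x) ^ (p - 1) := by
        have h := NNReal.coe_le_coe.mpr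
          (NNReal.add_rpow_le_rpow_add ⟨a, ha.le⟩ ⟨x, hx.1.le⟩ hp1)
        push_cast [NNReal.coe_rpow] at h
        convert h using 2 <;> rfl
      nlinarith
  have h0 : g 0 ≤ g b := hmono (Set.left_mem_Icc.mpr hb.le) (Set.right_mem_Icc.mpr hb.le) hb.le
  have hz : (0:ℝ) ^ p = 0 := Real.zero_rpow (by linarith)
  simp only [hg, add_zero, mul_zero, sub_zero, hz] at h0
  linarith
end

section
/- For real numbers a ≥ b > 0 and real p ≥ 2, we have (a+b)^p ≥ a^p + (p+1)·b^p. -/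
theorem power_sum_ineq' (a b p : ℝ) (hb : 0 < b) (hab : b ≤ a) (hp : 2 ≤ p) :
    (a + b) ^ p ≥ a ^ p + (p + 1) * b ^ p := by
  have ha : 0 < a := lt_of_lt_of_le hb hab
  have hc : 0 < a + b := by linarith
  have hcv := convexOn_rpow (p := p) (by linarith)
  set t : ℝ := (a - b) / a with ht
  have ht0 : 0 ≤ t := div_nonneg (by linarith) ha.le
  have ht1 : t ≤ 1 := by rw [div_le_one ha]; linarith
  -- a = (1-t) • b + t • (a+b)
  have hA := hcv.2 (Set.mem_Ici.mpr hb.le) (Set.mem_Ici.mpr hc.le)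
    (by linarith : (0:ℝ) ≤ 1 - t) ht0 (by ring)
  have hB := hcv.2 (Set.mem_Ici.mpr hb.le) (Set.mem_Ici.mpr hc.le)
    ht0 (by linarith : (0:ℝ) ≤ 1 - t) (by ring)
  simp only [smul_eq_mul] at hA hB
  have ea : (1 - t) * b + t * (a + b) = a := by rw [ht]; field_simp; ring
  have eb : t * b + (1 - t) * (a + b) = 2 * b := by rw [ht]; field_simp; ring
  rw [ea] at hA
  rw [eb] at hB
  -- so a^p + (2b)^p ≤ b^p + (a+b)^p
  have hsum : a ^ p + (2 * b) ^ p ≤ b ^ p + (a + b) ^ p := by linarith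
  have e3 : (2 * b) ^ p = 2 ^ p * b ^ p := Real.mul_rpow (by norm_num) hb.le
  -- 2^p ≥ 2p ≥ p + 2
  have hbern := one_add_mul_self_le_rpow_one_add (s := (1:ℝ)) (by norm_num)
    (p := p - 1) (by linarith)
  norm_num at hbern
  -- hbern : p ≤ 2 ^ (p-1)  (i.e. 1 + (p-1) ≤ 2^(p-1))
  have e2 : (2:ℝ) ^ p = 2 * 2 ^ (p - 1) := by
    rw [← Real.rpow_one_add' (by norm_num) (by intro h; linarith : (1:ℝ) + (p-1) ≠ 0)]
    norm_num
  have h2p : p + 2 ≤ 2 ^ p := by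
    rw [e2]; nlinarith
  have hbpp : 0 < b ^ p := Real.rpow_pos_of_pos hb _
  nlinarith [hsum, e3, h2p, hbpp]
end

section
/- Let k, n₁, n₂ be integers with n₁ ≤ k-2, n₂ ≤ k-2, and n₁ + n₂ ≥ k, and let p ≥ 2 be real. Setting n₁' = k-1 and n₂' = n₁+n₂-k+1, we have n₁'·(n₁'-1)^p + n₂'·(n₂'-1)^p > n₁·(n₁-1)^p + n₂·(n₂-1)^p. -/
open Real Set

lemma key_convex {g : ℝ → ℝ} (hg : StrictConvexOn ℝ (Set.Ici (0:ℝ)) g)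
    {a b c d : ℝ} (ha : 0 ≤ a) (hab : a < b) (hbc : b ≤ c) (hcd : c < d)
    (hs : a + d = b + c) : g b + g c < g a + g d := by
  have had : a < d := lt_of_lt_of_le hab (hbc.trans hcd.le)
  have hda : (0:ℝ) < d - a := by linarith
  have hda' : d - a ≠ 0 := ne_of_gt hda
  have hmd : d ∈ Set.Ici (0:ℝ) := by
    simp only [Set.mem_Ici]; linarith
  have hne : a ≠ d := ne_of_lt had
  have h1 : g b < ((d-b)/(d-a)) * g a + ((b-a)/(d-a)) * g d := by
    have := hg.2 ha hmd hne
      (show (0:ℝ) < (d-b)/(d-a) by apply div_pos; linarith; exact hda)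
      (show (0:ℝ) < (b-a)/(d-a) by apply div_pos; linarith; exact hda)
      (by field_simp; ring)
    simpa [smul_eq_mul, show (d-b)/(d-a) * a + (b-a)/(d-a) * d = b by field_simp; ring]
      using this
  have h2 : g c < ((d-c)/(d-a)) * g a + ((c-a)/(d-a)) * g d := by
    have := hg.2 ha hmd hne
      (show (0:ℝ) < (d-c)/(d-a) by apply div_pos; linarith; exact hda)
      (show (0:ℝ) < (c-a)/(d-a) by apply div_pos; linarith; exact hda)
      (by field_simp; ring)
    simpa [smul_eq_mul, show (d-c)/(d-a) * a + (c-a)/(d-a) * d = c by field_simp; ring]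
      using this
  have w1 : (d-b)/(d-a) + (d-c)/(d-a) = 1 := by
    rw [← add_div, div_eq_one_iff_eq hda']; linarith
  have w2 : (b-a)/(d-a) + (c-a)/(d-a) = 1 := by
    rw [← add_div, div_eq_one_iff_eq hda']; linarith
  have e1 : (d-b)/(d-a) * g a + (d-c)/(d-a) * g a = g a := by
    rw [← add_mul, w1, one_mul]
  have e2 : (b-a)/(d-a) * g d + (c-a)/(d-a) * g d = g d := by
    rw [← add_mul, w2, one_mul]
  linarith

lemma rw_term (p : ℝ) (hp : 2 ≤ p) {x : ℝ} (hx : 1 ≤ x) :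
    x * (x - 1) ^ p = (x - 1) ^ (p + 1) + (x - 1) ^ p := by
  rcases eq_or_lt_of_le hx with h | h
  · rw [← h]
    simp [Real.zero_rpow (by linarith : p ≠ 0),
      Real.zero_rpow (by linarith : p + 1 ≠ 0)]
  · have hy : (0:ℝ) < x - 1 := by linarith
    rw [Real.rpow_add_one (ne_of_gt hy)]
    ring

theorem clique_redistribution (k n₁ n₂ : ℤ) (p : ℝ) (hk : 4 ≤ k)
    (h1 : 1 ≤ n₁) (h2 : 1 ≤ n₂) (h1k : n₁ ≤ k - 2) (h2k : n₂ ≤ k - 2)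
    (hsum : k ≤ n₁ + n₂) (hp : 2 ≤ p) :
    ((k : ℝ) - 1) * ((k : ℝ) - 1 - 1) ^ p
      + ((n₁ : ℝ) + n₂ - k + 1) * ((n₁ : ℝ) + n₂ - k + 1 - 1) ^ p
      > (n₁ : ℝ) * ((n₁ : ℝ) - 1) ^ p + (n₂ : ℝ) * ((n₂ : ℝ) - 1) ^ p := by
  set g : ℝ → ℝ := fun y => y ^ (p + 1) + y ^ p with hg
  have hgconv : StrictConvexOn ℝ (Set.Ici (0:ℝ)) g :=
    (strictConvexOn_rpow (by linarith : (1:ℝ) < p + 1)).add_convexOn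
      (convexOn_rpow (by linarith : (1:ℝ) ≤ p))
  have hK : (4:ℝ) ≤ (k:ℝ) := by exact_mod_cast hk
  have hN1 : (1:ℝ) ≤ (n₁:ℝ) := by exact_mod_cast h1
  have hN2 : (1:ℝ) ≤ (n₂:ℝ) := by exact_mod_cast h2
  have hN1k : (n₁:ℝ) ≤ (k:ℝ) - 2 := by
    have : ((n₁:ℝ)) ≤ ((k - 2 : ℤ) : ℝ) := by exact_mod_cast h1k
    push_cast at this; linarith
  have hN2k : (n₂:ℝ) ≤ (k:ℝ) - 2 := by
    have : ((n₂:ℝ)) ≤ ((k - 2 : ℤ) : ℝ) := by exact_mod_cast h2k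
    push_cast at this; linarith
  have hS : (k:ℝ) ≤ (n₁:ℝ) + (n₂:ℝ) := by exact_mod_cast hsum
  -- rewrite all four terms
  rw [rw_term p hp (by linarith : (1:ℝ) ≤ (k:ℝ) - 1),
      rw_term p hp (by linarith : (1:ℝ) ≤ (n₁:ℝ) + n₂ - k + 1),
      rw_term p hp hN1, rw_term p hp hN2]
  have key : ∀ b c : ℝ, b ≤ c → 1 ≤ b → c ≤ (k:ℝ) - 2 → (k:ℝ) ≤ b + c + 2 →
      g (b - 1) + g (c - 1) < g ((n₁:ℝ) + n₂ - k) + g ((k:ℝ) - 2) →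
      True := fun _ _ _ _ _ _ _ => trivial
  rcases le_total (n₁:ℝ) (n₂:ℝ) with hle | hle
  · have := key_convex hgconv
      (a := (n₁:ℝ) + n₂ - k) (b := (n₁:ℝ) - 1) (c := (n₂:ℝ) - 1) (d := (k:ℝ) - 2)
      (by linarith) (by linarith) (by linarith) (by linarith) (by ring)
    simp only [hg] at this ⊢
    have e1 : (n₁:ℝ) + n₂ - k + 1 - 1 = (n₁:ℝ) + n₂ - k := by ring
    have e2 : (k:ℝ) - 1 - 1 = (k:ℝ) - 2 := by ring
    rw [e1, e2]
    linarith
  · have := key_convex hgconv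
      (a := (n₁:ℝ) + n₂ - k) (b := (n₂:ℝ) - 1) (c := (n₁:ℝ) - 1) (d := (k:ℝ) - 2)
      (by linarith) (by linarith) (by linarith) (by linarith) (by ring)
    simp only [hg] at this ⊢
    have e1 : (n₁:ℝ) + n₂ - k + 1 - 1 = (n₁:ℝ) + n₂ - k := by ring
    have e2 : (k:ℝ) - 1 - 1 = (k:ℝ) - 2 := by ring
    rw [e1, e2]
    linarith
end

section
/- For every integer k ≥ 4 and real p ≥ 2, with t = ⌊k/2⌋ - 1, the following inequality holds: t·(6k-7)^p + (6k - ⌈k/2⌉ - 6)·t^p + (1 + k - 2⌊k/2⌋)·(⌈k/2⌉-1)^p > 6(k-1)(k-2)^p. -/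
theorem six_cliques (k : ℤ) (p : ℝ) (hk : 4 ≤ k) (hp : 2 ≤ p) :
    ((⌊(k : ℝ) / 2⌋ : ℝ) - 1) * (6 * (k : ℝ) - 7) ^ p
      + (6 * (k : ℝ) - (⌈(k : ℝ) / 2⌉ : ℝ) - 6) * ((⌊(k : ℝ) / 2⌋ : ℝ) - 1) ^ p
      + (1 + (k : ℝ) - 2 * (⌊(k : ℝ) / 2⌋ : ℝ)) * ((⌈(k : ℝ) / 2⌉ : ℝ) - 1) ^ p
      > 6 * ((k : ℝ) - 1) * ((k : ℝ) - 2) ^ p := by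
  have hk' : (4 : ℝ) ≤ (k : ℝ) := by exact_mod_cast hk
  set a : ℝ := (⌊(k : ℝ) / 2⌋ : ℝ) with hadef
  set b : ℝ := (⌈(k : ℝ) / 2⌉ : ℝ) with hbdef
  have ha1 : a ≤ (k : ℝ) / 2 := Int.floor_le _
  have ha2 : (k : ℝ) / 2 - 1 < a := Int.sub_one_lt_floor _
  have hb1 : (k : ℝ) / 2 ≤ b := Int.le_ceil _
  have hb2 : b < (k : ℝ) / 2 + 1 := Int.ceil_lt_add_one _
  -- integrality: 2a ≥ k - 1
  have hz1 : k - 2 < 2 * ⌊(k : ℝ) / 2⌋ := by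
    have h : ((k - 2 : ℤ) : ℝ) < ((2 * ⌊(k : ℝ) / 2⌋ : ℤ) : ℝ) := by push_cast; linarith
    exact_mod_cast h
  have hz2 : k - 1 ≤ 2 * ⌊(k : ℝ) / 2⌋ := by omega
  have hak : (k : ℝ) - 1 ≤ 2 * a := by
    have h : ((k - 1 : ℤ) : ℝ) ≤ ((2 * ⌊(k : ℝ) / 2⌋ : ℤ) : ℝ) := by exact_mod_cast hz2
    push_cast at h; linarith
  -- main term
  set x : ℝ := (k : ℝ) - 2 with hxdef
  set y : ℝ := 6 * (k : ℝ) - 7 with hydef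
  have hxpos : 0 < x := by simp only [hxdef]; linarith
  have hypos : 0 < y := by simp only [hydef]; linarith
  have hxp : (0 : ℝ) < x ^ p := Real.rpow_pos_of_pos hxpos p
  have hyx : (1 : ℝ) ≤ y / x := by
    rw [le_div_iff₀ hxpos]; simp only [hxdef, hydef]; linarith
  have key1 : (y / x) ^ (2 : ℝ) ≤ (y / x) ^ p :=
    Real.rpow_le_rpow_of_exponent_le hyx hp
  have key2 : (y / x) ^ (2 : ℝ) = (y / x) ^ (2 : ℕ) := by
    rw [← Real.rpow_natCast (y / x) 2]; norm_num
  have hdiv : (y / x) ^ p = y ^ p / x ^ p :=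
    Real.div_rpow hypos.le hxpos.le p
  have hyp0 : (0 : ℝ) < y ^ p := Real.rpow_pos_of_pos hypos p
  have hcross : y ^ 2 * x ^ p ≤ y ^ p * x ^ 2 := by
    have h := key1
    rw [key2, hdiv, div_pow, div_le_div_iff₀ (by positivity) (by positivity)] at h
    linarith
  have ha1' : (0 : ℝ) ≤ a - 1 := by linarith
  have hpoly : 6 * ((k : ℝ) - 1) * x ^ 2 < (a - 1) * y ^ 2 := by
    simp only [hxdef, hydef]
    nlinarith [sq_nonneg ((k : ℝ) - 4), sq_nonneg (2 * a - (k : ℝ) + 1)]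
  have hmain : 6 * ((k : ℝ) - 1) * x ^ p < (a - 1) * y ^ p := by
    have h1 : (a - 1) * (y ^ 2 * x ^ p) ≤ (a - 1) * (y ^ p * x ^ 2) :=
      mul_le_mul_of_nonneg_left hcross (by linarith)
    have h2 : 6 * ((k : ℝ) - 1) * x ^ 2 * x ^ p < (a - 1) * y ^ 2 * x ^ p :=
      mul_lt_mul_of_pos_right hpoly hxp
    have h3 : 6 * ((k : ℝ) - 1) * x ^ p * x ^ 2 < (a - 1) * y ^ p * x ^ 2 := by nlinarith
    have hx2 : (0 : ℝ) < x ^ 2 := by positivity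
    exact lt_of_mul_lt_mul_right h3 hx2.le
  -- extra terms nonneg
  have hT2 : 0 ≤ (6 * (k : ℝ) - b - 6) * (a - 1) ^ p := by
    apply mul_nonneg
    · linarith
    · exact Real.rpow_nonneg (by linarith) p
  have hT3 : 0 ≤ (1 + (k : ℝ) - 2 * a) * (b - 1) ^ p := by
    apply mul_nonneg
    · linarith
    · exact Real.rpow_nonneg (by linarith) p
  linarith
end

section
/- Let k ≥ 4 be an integer, p ≥ 2 real, and let n₁, n₂ be integers with k ≤ n₁ ≤ 2k-1 and k ≤ n₂ ≤ 2k-1. Define f(n) = (n-k+2) + (k-3)^p + (n-1)^p. Then f(k-1) + f(n₁+n₂-k+1) > f(n₁) + f(n₂). -/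
theorem typeA_merge (k n₁ n₂ : ℤ) (p : ℝ) (f : ℝ → ℝ) (hk : 4 ≤ k) (hp : 2 ≤ p)
    (h1l : k ≤ n₁) (h1u : n₁ ≤ 2 * k - 1) (h2l : k ≤ n₂) (h2u : n₂ ≤ 2 * k - 1)
    (hf : ∀ n : ℝ, f n = (n - (k : ℝ) + 2) + ((k : ℝ) - 3) ^ (p + 1) + (n - 1) ^ p) :
    f ((k : ℝ) - 1) + f ((n₁ : ℝ) + (n₂ : ℝ) - (k : ℝ) + 1) > f (n₁ : ℝ) + f (n₂ : ℝ) := by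
  have hk' : (4 : ℝ) ≤ (k : ℝ) := by exact_mod_cast hk
  have h1 : (k : ℝ) ≤ (n₁ : ℝ) := by exact_mod_cast h1l
  have h2 : (k : ℝ) ≤ (n₂ : ℝ) := by exact_mod_cast h2l
  set M : ℝ := (k : ℝ) - 2 with hM
  set A : ℝ := (n₁ : ℝ) - 1 with hA
  set B : ℝ := (n₂ : ℝ) - 1 with hB
  have hMA : M + 1 ≤ A := by simp only [hM, hA]; linarith
  have hMB : M + 1 ≤ B := by simp only [hM, hB]; linarith
  have hM0 : (0 : ℝ) ≤ M := by linarith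
  have hd : (0 : ℝ) < A + B - 2 * M := by linarith
  have hS0 : (0 : ℝ) ≤ A + B - M := by linarith
  have hne : M ≠ A + B - M := by intro h; rw [h] at hd; linarith
  set t : ℝ := (B - M) / (A + B - 2 * M) with ht'
  set u : ℝ := (A - M) / (A + B - 2 * M) with hu'
  have ht : 0 < t := div_pos (by linarith) hd
  have hu : 0 < u := div_pos (by linarith) hd
  have htu : t + u = 1 := by
    rw [ht', hu', ← add_div, div_eq_one_iff_eq (ne_of_gt hd)]; ring
  have hAeq : t * M + u * (A + B - M) = A := by
    rw [ht', hu', div_mul_eq_mul_div, div_mul_eq_mul_div, ← add_div, div_eq_iff (ne_of_gt hd)]; ring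
  have hBeq : u * M + t * (A + B - M) = B := by
    rw [ht', hu', div_mul_eq_mul_div, div_mul_eq_mul_div, ← add_div, div_eq_iff (ne_of_gt hd)]; ring
  have sc := strictConvexOn_rpow (by linarith : (1 : ℝ) < p)
  have ineq1 := sc.2 (Set.mem_Ici.mpr hM0) (Set.mem_Ici.mpr hS0) hne ht hu htu
  have ineq2 := sc.2 (Set.mem_Ici.mpr hM0) (Set.mem_Ici.mpr hS0) hne hu ht
    (by linarith : u + t = 1)
  simp only [smul_eq_mul] at ineq1 ineq2
  rw [hAeq] at ineq1
  rw [hBeq] at ineq2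
  have h3 : t * M ^ p + u * M ^ p = M ^ p := by rw [← add_mul, htu, one_mul]
  have h4 : t * (A + B - M) ^ p + u * (A + B - M) ^ p = (A + B - M) ^ p := by
    rw [← add_mul, htu, one_mul]
  have key : A ^ p + B ^ p < M ^ p + (A + B - M) ^ p := by linarith
  rw [hf, hf, hf, hf]
  have e1 : (k : ℝ) - 1 - 1 = M := by rw [hM]; ring
  have e2 : (n₁ : ℝ) + (n₂ : ℝ) - (k : ℝ) + 1 - 1 = A + B - M := by
    rw [hM, hA, hB]; ring
  have e3 : (n₁ : ℝ) - 1 = A := rfl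
  have e4 : (n₂ : ℝ) - 1 = B := rfl
  rw [e1, e2, e3, e4]
  linarith [key]
end

section
/- Let k ≥ 4 be an integer, p ≥ 2 real, and n₁ ≥ n₂ ≥ k integers. Then (⌊k/2⌋-1)·((n₁+n₂-1)^p - (n₁-1)^p - (n₂-1)^p) + ⌈k/2⌉·(⌊k/2⌋-1)^p - (1+k-2⌊k/2⌋)·(⌈k/2⌉-1)^p > 0. -/
lemma gain_lemma (a b p : ℝ) (hb : 0 < b) (hab : b ≤ a) (hp : 2 ≤ p) :
    a ^ p + 3 * b ^ p ≤ (a + b) ^ p := by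
  have ha : 0 < a := lt_of_lt_of_le hb hab
  have hab0 : 0 < a + b := by linarith
  have hsplit : ∀ x : ℝ, 0 < x → x ^ p = x ^ 2 * x ^ (p - 2) := by
    intro x hx
    rw [← Real.rpow_natCast x 2, ← Real.rpow_add hx]
    norm_num
  have h1 : a ^ (p-2) ≤ (a+b) ^ (p-2) :=
    Real.rpow_le_rpow ha.le (by linarith) (by linarith)
  have h2 : b ^ (p-2) ≤ (a+b) ^ (p-2) :=
    Real.rpow_le_rpow hb.le (by linarith) (by linarith)
  have hbp : (0:ℝ) ≤ b ^ (p-2) := Real.rpow_nonneg hb.le _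
  rw [hsplit a ha, hsplit b hb, hsplit (a+b) hab0]
  nlinarith [mul_le_mul_of_nonneg_left h1 (sq_nonneg a),
    mul_le_mul_of_nonneg_left h2 (sq_nonneg b), sq_nonneg (a-b), mul_pos hb hb,
    mul_le_mul_of_nonneg_right (mul_le_mul_of_nonneg_right hab hb.le) hbp]

theorem typeB_merge (k n₁ n₂ : ℤ) (p : ℝ) (hk : 4 ≤ k) (hp : 2 ≤ p)
    (h21 : n₂ ≤ n₁) (h2k : k ≤ n₂) :
    ((⌊(k : ℝ) / 2⌋ : ℝ) - 1) * (((n₁ : ℝ) + n₂ - 1) ^ p - ((n₁ : ℝ) - 1) ^ p - ((n₂ : ℝ) - 1) ^ p)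
      + (⌈(k : ℝ) / 2⌉ : ℝ) * ((⌊(k : ℝ) / 2⌋ : ℝ) - 1) ^ p
      - (1 + (k : ℝ) - 2 * (⌊(k : ℝ) / 2⌋ : ℝ)) * ((⌈(k : ℝ) / 2⌉ : ℝ) - 1) ^ p > 0 := by
  set A : ℝ := (n₁ : ℝ) - 1 with hA
  set B : ℝ := (n₂ : ℝ) - 1 with hB
  have hkB : ((k : ℝ) - 1) ≤ B := by simp [hB]; exact_mod_cast h2k
  have hBpos : 0 < B := by
    have : (4:ℝ) ≤ (k:ℝ) := by exact_mod_cast hk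
    linarith
  have hBA : B ≤ A := by simp [hA, hB]; exact_mod_cast h21
  have hApos : 0 < A := lt_of_lt_of_le hBpos hBA
  have hBp : 0 < B ^ p := Real.rpow_pos_of_pos hBpos p
  -- gain bound
  have hgain : A ^ p + 3 * B ^ p ≤ (A + B + 1) ^ p := by
    have h1 : (A+1) ^ p + 3 * B ^ p ≤ ((A+1) + B) ^ p :=
      gain_lemma (A+1) B p hBpos (by linarith) hp
    have h2 : A ^ p ≤ (A+1) ^ p := Real.rpow_le_rpow hApos.le (by linarith) (by linarith)
    rw [show A + B + 1 = (A+1)+B by ring]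
    linarith
  have hG : 2 * B ^ p ≤ (A + B + 1) ^ p - A ^ p - B ^ p := by linarith
  have hGe : ((n₁:ℝ) + n₂ - 1) = A + B + 1 := by ring
  rw [hGe]
  obtain ⟨m, hm | hm⟩ := Int.even_or_odd' k
  · -- k = 2m, m ≥ 2
    have hm2 : 2 ≤ m := by omega
    have hmR : (2:ℝ) ≤ (m:ℝ) := by exact_mod_cast hm2
    have hfl : ⌊(k : ℝ) / 2⌋ = m := by
      rw [hm]; push_cast; rw [mul_comm, mul_div_assoc]; norm_num
    have hcl : ⌈(k : ℝ) / 2⌉ = m := by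
      rw [hm]; push_cast; rw [mul_comm, mul_div_assoc]; norm_num
    rw [hfl, hcl]
    have hmp : (0:ℝ) ≤ ((m:ℝ) - 1) ^ p := Real.rpow_nonneg (by linarith) p
    have hkm : (k:ℝ) = 2 * (m:ℝ) := by exact_mod_cast hm
    rw [hkm]
    have h₁ : 2 * B ^ p ≤ ((m:ℝ)-1) * ((A + B + 1) ^ p - A ^ p - B ^ p) := by
      calc 2 * B ^ p = 1 * (2 * B ^ p) := by ring
      _ ≤ ((m:ℝ)-1) * ((A+B+1)^p - A^p - B^p) := by
          apply mul_le_mul (by linarith) hG (by linarith) (by linarith)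
    nlinarith [hmp, hBp]
  · -- k = 2m+1, m ≥ 2
    have hm2 : 2 ≤ m := by omega
    have hmR : (2:ℝ) ≤ (m:ℝ) := by exact_mod_cast hm2
    have hfl : ⌊(k : ℝ) / 2⌋ = m := by
      rw [hm, Int.floor_eq_iff]
      constructor <;> push_cast <;> linarith
    have hcl : ⌈(k : ℝ) / 2⌉ = m + 1 := by
      rw [hm, Int.ceil_eq_iff]
      constructor <;> push_cast <;> linarith
    rw [hfl, hcl]
    have hmp : (0:ℝ) ≤ ((m:ℝ) - 1) ^ p := Real.rpow_nonneg (by linarith) p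
    have hmpos : (0:ℝ) < (m:ℝ) := by linarith
    have hmPp : 0 < (m:ℝ) ^ p := Real.rpow_pos_of_pos hmpos p
    have hB2m : (2:ℝ) * m ≤ B := by
      have : ((k:ℝ)) = 2*(m:ℝ)+1 := by exact_mod_cast hm
      linarith [hkB]
    have hBp4 : 4 * (m:ℝ) ^ p ≤ B ^ p := by
      have h1 : ((2:ℝ) * m) ^ p ≤ B ^ p :=
        Real.rpow_le_rpow (by linarith) hB2m (by linarith)
      have h2 : ((2:ℝ) * m) ^ p = 2 ^ p * (m:ℝ) ^ p := Real.mul_rpow (by norm_num) hmpos.le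
      have h3 : (4:ℝ) ≤ 2 ^ p := by
        have := Real.rpow_le_rpow_of_exponent_le (by norm_num : (1:ℝ) ≤ 2) hp
        rw [show ((2:ℝ):ℝ)^(2:ℝ) = 4 by
          rw [show (2:ℝ) = ((2:ℕ):ℝ) by norm_num, Real.rpow_natCast]; norm_num] at this
        exact this
      nlinarith
    have hkm : (k:ℝ) = 2 * (m:ℝ) + 1 := by exact_mod_cast hm
    rw [hkm]
    have h₁ : 2 * B ^ p ≤ ((m:ℝ)-1) * ((A+B+1) ^ p - A ^ p - B ^ p) := by
      calc 2 * B ^ p = 1 * (2 * B ^ p) := by ring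
      _ ≤ ((m:ℝ)-1) * ((A+B+1)^p - A^p - B^p) := by
          apply mul_le_mul (by linarith) hG (by positivity) (by linarith)
    push_cast
    rw [show ((m:ℝ) + 1 - 1) = (m:ℝ) by ring]
    nlinarith [hmp, hmPp, hBp4, h₁]
end

section
/- For every integer k ≥ 4 and real p ≥ 2, 2(k-1)^p - 2(⌈k/2⌉-1)^p + ⌈k/2⌉·(⌊k/2⌋-1)^p > 0. -/
theorem typeB_merge_final (k : ℤ) (p : ℝ) (hk : 4 ≤ k) (hp : 2 ≤ p) :
    2 * ((k : ℝ) - 1) ^ p - 2 * ((⌈(k : ℝ) / 2⌉ : ℝ) - 1) ^ p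
      + (⌈(k : ℝ) / 2⌉ : ℝ) * ((⌊(k : ℝ) / 2⌋ : ℝ) - 1) ^ p > 0 := by
  have hk' : (4 : ℝ) ≤ (k : ℝ) := by exact_mod_cast hk
  have hc1 : ((⌈(k : ℝ) / 2⌉ : ℤ) : ℝ) < (k : ℝ) / 2 + 1 := Int.ceil_lt_add_one _
  have hc2 : (2 : ℝ) ≤ ((⌈(k : ℝ) / 2⌉ : ℤ) : ℝ) := le_trans (by linarith) (Int.le_ceil _)
  have hf2 : (2 : ℝ) ≤ ((⌊(k : ℝ) / 2⌋ : ℤ) : ℝ) := by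
    have : (2 : ℤ) ≤ ⌊(k : ℝ) / 2⌋ := Int.le_floor.mpr (by push_cast; linarith)
    exact_mod_cast this
  have key : (((⌈(k : ℝ) / 2⌉ : ℤ) : ℝ) - 1) ^ p < ((k : ℝ) - 1) ^ p :=
    Real.rpow_lt_rpow (by linarith) (by linarith) (by linarith)
  have h3 : 0 ≤ ((⌈(k : ℝ) / 2⌉ : ℤ) : ℝ) * (((⌊(k : ℝ) / 2⌋ : ℤ) : ℝ) - 1) ^ p :=
    mul_nonneg (by linarith) (Real.rpow_nonneg (by linarith) _)
  linarith
end

section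
/- Let k ≥ 4 be an integer, p ≥ 2 real, and let nᵢ ≥ 2k and 1 ≤ nⱼ ≤ k-1 be integers. Then (⌊k/2⌋-1)·((nᵢ+nⱼ-1)^p - (nᵢ-1)^p) + nⱼ·(⌊k/2⌋-1)^p - nⱼ·(nⱼ-1)^p > 0. -/
lemma aux_split (x p : ℝ) (hx : 0 < x) : x ^ p = x ^ 2 * x ^ (p - 2) := by
  rw [← Real.rpow_two, ← Real.rpow_add hx]
  ring_nf

lemma aux1 (a b p : ℝ) (hb : 0 < b) (hba : b ≤ a) (hp : 2 ≤ p) :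
    (a ^ 2 - b ^ 2) * b ^ (p - 2) ≤ a ^ p - b ^ p := by
  have ha : 0 < a := lt_of_lt_of_le hb hba
  rw [aux_split a p ha, aux_split b p hb]
  have h1 : b ^ (p - 2) ≤ a ^ (p - 2) :=
    Real.rpow_le_rpow hb.le hba (by linarith)
  have h2 : (0:ℝ) < b ^ (p - 2) := Real.rpow_pos_of_pos hb _
  nlinarith [sq_nonneg a, sq_nonneg b]

lemma aux2 (c d p : ℝ) (hc : 0 ≤ c) (hcd : c ≤ d) (hd : 0 < d) (hp : 2 ≤ p) :
    c ^ p ≤ c ^ 2 * d ^ (p - 2) := by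
  rcases eq_or_lt_of_le hc with h | h
  · rw [← h, Real.zero_rpow (by positivity : p ≠ 0)]
    positivity
  · rw [aux_split c p h]
    have h1 : c ^ (p - 2) ≤ d ^ (p - 2) :=
      Real.rpow_le_rpow h.le hcd (by linarith)
    nlinarith [sq_nonneg c]

theorem absorb_clique (k ni nj : ℤ) (p : ℝ) (hk : 4 ≤ k) (hp : 2 ≤ p)
    (hni : 2 * k ≤ ni) (hnj1 : 1 ≤ nj) (hnjk : nj ≤ k - 1) :
    ((⌊(k : ℝ) / 2⌋ : ℝ) - 1) * (((ni : ℝ) + nj - 1) ^ p - ((ni : ℝ) - 1) ^ p)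
      + (nj : ℝ) * ((⌊(k : ℝ) / 2⌋ : ℝ) - 1) ^ p - (nj : ℝ) * ((nj : ℝ) - 1) ^ p > 0 := by
  set m : ℤ := ⌊(k : ℝ) / 2⌋ with hm
  have hkR : (4:ℝ) ≤ (k:ℝ) := by exact_mod_cast hk
  have hniR : 2 * (k:ℝ) ≤ (ni:ℝ) := by exact_mod_cast hni
  have hnj1R : (1:ℝ) ≤ (nj:ℝ) := by exact_mod_cast hnj1
  have hnjkR : (nj:ℝ) ≤ (k:ℝ) - 1 := by
    have : (nj:ℝ) ≤ ((k - 1 : ℤ) : ℝ) := by exact_mod_cast hnjk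
    push_cast at this; linarith
  have hm2 : (2:ℤ) ≤ m := Int.le_floor.2 (by push_cast; linarith)
  have hm2R : (2:ℝ) ≤ (m:ℝ) := by exact_mod_cast hm2
  have hmfloor : (k:ℝ) / 2 - 1 < (m:ℝ) := Int.sub_one_lt_floor _
  set T : ℝ := (m:ℝ) - 1 with hT
  set A : ℝ := (ni:ℝ) + nj - 1 with hA
  set B : ℝ := (ni:ℝ) - 1 with hB
  set C : ℝ := (nj:ℝ) - 1 with hC
  have hT1 : (1:ℝ) ≤ T := by simp [hT]; linarith
  have h2mZ : k - 1 ≤ 2 * m := by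
    have hlt : (k:ℝ) - 2 < ((2 * m : ℤ) : ℝ) := by push_cast; linarith
    have : k - 2 < 2 * m := by exact_mod_cast hlt
    omega
  have h2T : (k:ℝ) - 3 ≤ 2 * T := by
    have : ((k:ℝ)) - 1 ≤ ((2 * m : ℤ) : ℝ) := by exact_mod_cast h2mZ
    push_cast at this; simp [hT]; linarith
  have hB0 : (0:ℝ) < B := by simp [hB]; linarith
  have hBA : B ≤ A := by simp [hA, hB]; linarith
  have hC0 : (0:ℝ) ≤ C := by simp [hC]; linarith
  have hCk : C ≤ (k:ℝ) - 2 := by simp [hC]; linarith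
  have hk2 : (0:ℝ) < (k:ℝ) - 2 := by linarith
  have hCB : (k:ℝ) - 2 ≤ B := by simp [hB]; linarith
  have h1 : (A ^ 2 - B ^ 2) * B ^ (p - 2) ≤ A ^ p - B ^ p := aux1 A B p hB0 hBA hp
  have h2 : C ^ p ≤ C ^ 2 * ((k:ℝ) - 2) ^ (p - 2) := aux2 C ((k:ℝ) - 2) p hC0 hCk hk2 hp
  have h3 : ((k:ℝ) - 2) ^ (p - 2) ≤ B ^ (p - 2) :=
    Real.rpow_le_rpow hk2.le hCB (by linarith)
  have h4 : (0:ℝ) < T ^ p := Real.rpow_pos_of_pos (by linarith) _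
  have h5 : (0:ℝ) < B ^ (p - 2) := Real.rpow_pos_of_pos hB0 _
  -- key polynomial inequality
  have h8 : (nj:ℝ) * C ^ 2 ≤ T * (A ^ 2 - B ^ 2) := by
    have hTA : A ^ 2 - B ^ 2 = (nj:ℝ) * (2 * (ni:ℝ) + (nj:ℝ) - 2) := by
      simp [hA, hB]; ring
    rw [hTA]
    have hnj0 : (0:ℝ) < (nj:ℝ) := by linarith
    have key : C ^ 2 ≤ T * (2 * (ni:ℝ) + (nj:ℝ) - 2) := by
      have e1 : (4:ℝ) * (k:ℝ) - 1 ≤ 2 * (ni:ℝ) + (nj:ℝ) - 2 := by linarith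
      have e2 : C ^ 2 ≤ ((k:ℝ) - 2) ^ 2 := pow_le_pow_left₀ hC0 hCk 2
      have e3 : 2 * ((k:ℝ) - 2) ^ 2 ≤ ((k:ℝ) - 3) * (4 * (k:ℝ) - 1) := by
        nlinarith [sq_nonneg ((k:ℝ) - 4)]
      have e4 : ((k:ℝ) - 3) * (4 * (k:ℝ) - 1) ≤ 2 * T * (4 * (k:ℝ) - 1) :=
        mul_le_mul_of_nonneg_right h2T (by linarith)
      have e5 : T * (4 * (k:ℝ) - 1) ≤ T * (2 * (ni:ℝ) + (nj:ℝ) - 2) :=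
        mul_le_mul_of_nonneg_left e1 (by linarith)
      linarith
    calc (nj:ℝ) * C ^ 2 ≤ (nj:ℝ) * (T * (2 * (ni:ℝ) + (nj:ℝ) - 2)) :=
          mul_le_mul_of_nonneg_left key (by linarith)
      _ = T * ((nj:ℝ) * (2 * (ni:ℝ) + (nj:ℝ) - 2)) := by ring
  -- combine
  have h6 : (nj:ℝ) * C ^ p ≤ (nj:ℝ) * (C ^ 2 * B ^ (p - 2)) := by
    have hnj0 : (0:ℝ) ≤ (nj:ℝ) := by linarith
    have : C ^ p ≤ C ^ 2 * B ^ (p - 2) := by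
      calc C ^ p ≤ C ^ 2 * ((k:ℝ) - 2) ^ (p - 2) := h2
        _ ≤ C ^ 2 * B ^ (p - 2) := mul_le_mul_of_nonneg_left h3 (sq_nonneg C)
    linarith [mul_le_mul_of_nonneg_left this hnj0]
  have h7 : T * ((A ^ 2 - B ^ 2) * B ^ (p - 2)) ≤ T * (A ^ p - B ^ p) :=
    mul_le_mul_of_nonneg_left h1 (by linarith)
  have h9 : (nj:ℝ) * C ^ 2 * B ^ (p - 2) ≤ T * (A ^ 2 - B ^ 2) * B ^ (p - 2) :=
    mul_le_mul_of_nonneg_right h8 h5.le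
  have h10 : (0:ℝ) < (nj:ℝ) * T ^ p := by positivity
  have h7' : T * (A ^ 2 - B ^ 2) * B ^ (p - 2) ≤ T * (A ^ p - B ^ p) := by
    rw [mul_assoc]; exact h7
  have h6' : (nj:ℝ) * C ^ p ≤ (nj:ℝ) * C ^ 2 * B ^ (p - 2) := by
    rw [mul_assoc]; exact h6
  linarith
end

section
/- For every integer k ≥ 4, real p ≥ 2, and integers nᵢ ≥ 2k, 1 ≤ nⱼ ≤ k-1: p·(k/2 - 3/2)·(nᵢ-1)^(p-1)·nⱼ + nⱼ·(⌊k/2⌋-1)^p - nⱼ·(nⱼ-1)^p ≥ nⱼ·(2k-6)·(k-1/2)^(p-1) - nⱼ·(k-2)^p + nⱼ·(⌊k/2⌋-1)^p > 0. -/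
theorem absorb_chain (k ni nj : ℤ) (p : ℝ) (hk : 4 ≤ k) (hp : 2 ≤ p)
    (hni : 2 * k ≤ ni) (hnj1 : 1 ≤ nj) (hnjk : nj ≤ k - 1) :
    p * ((k : ℝ) / 2 - 3 / 2) * ((ni : ℝ) - 1) ^ (p - 1) * (nj : ℝ)
        + (nj : ℝ) * ((⌊(k : ℝ) / 2⌋ : ℝ) - 1) ^ p - (nj : ℝ) * ((nj : ℝ) - 1) ^ p
      ≥ (nj : ℝ) * (2 * (k : ℝ) - 6) * ((k : ℝ) - 1 / 2) ^ (p - 1)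
        - (nj : ℝ) * ((k : ℝ) - 2) ^ p + (nj : ℝ) * ((⌊(k : ℝ) / 2⌋ : ℝ) - 1) ^ p ∧
    (nj : ℝ) * (2 * (k : ℝ) - 6) * ((k : ℝ) - 1 / 2) ^ (p - 1)
        - (nj : ℝ) * ((k : ℝ) - 2) ^ p + (nj : ℝ) * ((⌊(k : ℝ) / 2⌋ : ℝ) - 1) ^ p > 0 := by
  have hk' : (4:ℝ) ≤ (k:ℝ) := by exact_mod_cast hk
  have hni' : 2 * (k:ℝ) ≤ (ni:ℝ) := by exact_mod_cast hni
  have hnj1' : (1:ℝ) ≤ (nj:ℝ) := by exact_mod_cast hnj1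
  have hnjk' : (nj:ℝ) ≤ (k:ℝ) - 1 := by exact_mod_cast hnjk
  have hp1 : 1 ≤ p - 1 := by linarith
  have hfl : (2:ℤ) ≤ ⌊(k:ℝ)/2⌋ := by
    rw [Int.le_floor]; push_cast; linarith
  have hfl' : (1:ℝ) ≤ (⌊(k:ℝ)/2⌋:ℝ) - 1 := by
    have : (2:ℝ) ≤ (⌊(k:ℝ)/2⌋:ℝ) := by exact_mod_cast hfl
    linarith
  have hB0 : (0:ℝ) < ((k:ℝ) - 1/2) ^ (p-1) := Real.rpow_pos_of_pos (by linarith) _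
  have hA : 2 * (((k:ℝ) - 1/2) ^ (p-1)) ≤ ((ni:ℝ) - 1) ^ (p-1) := by
    have h2 : (2:ℝ) * ((k:ℝ) - 1/2) ≤ (ni:ℝ) - 1 := by linarith
    have hmono := Real.rpow_le_rpow (by nlinarith : (0:ℝ) ≤ 2 * ((k:ℝ) - 1/2)) h2
      (by linarith : (0:ℝ) ≤ p - 1)
    rw [Real.mul_rpow (by norm_num) (by linarith)] at hmono
    have h2p : (2:ℝ) ≤ 2 ^ (p-1) := by
      calc (2:ℝ) = 2 ^ (1:ℝ) := (Real.rpow_one 2).symm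
      _ ≤ 2 ^ (p-1) := Real.rpow_le_rpow_of_exponent_le (by norm_num) hp1
    nlinarith
  have hC : ((nj:ℝ) - 1) ^ p ≤ ((k:ℝ) - 2) ^ p :=
    Real.rpow_le_rpow (by linarith) (by linarith) (by linarith)
  have hD : ((k:ℝ) - 2) ^ p ≤ ((k:ℝ) - 2) * ((k:ℝ) - 1/2) ^ (p-1) := by
    have he : ((k:ℝ) - 2) ^ p = ((k:ℝ) - 2) ^ ((1:ℝ) + (p-1)) := by ring_nf
    rw [he, Real.rpow_add (by linarith), Real.rpow_one]
    have hmono := Real.rpow_le_rpow (by linarith : (0:ℝ) ≤ (k:ℝ) - 2)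
      (by linarith : (k:ℝ) - 2 ≤ (k:ℝ) - 1/2) (by linarith : (0:ℝ) ≤ p - 1)
    nlinarith
  have hE : (0:ℝ) < ((⌊(k:ℝ)/2⌋:ℝ) - 1) ^ p := Real.rpow_pos_of_pos (by linarith) _
  constructor
  · have hkey : (nj:ℝ) * (2 * (k:ℝ) - 6) * ((k:ℝ) - 1/2) ^ (p-1)
        ≤ p * ((k:ℝ)/2 - 3/2) * ((ni:ℝ) - 1) ^ (p-1) * (nj:ℝ) := by
      have h1 : ((k:ℝ) - 3) * (2 * (((k:ℝ) - 1/2) ^ (p-1))) ≤ ((k:ℝ) - 3) * (((ni:ℝ) - 1) ^ (p-1)) :=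
        mul_le_mul_of_nonneg_left hA (by linarith)
      have hA0 : (0:ℝ) ≤ ((ni:ℝ) - 1) ^ (p-1) :=
        Real.rpow_nonneg (by linarith) _
      nlinarith [mul_le_mul_of_nonneg_left h1 (by linarith : (0:ℝ) ≤ (nj:ℝ)),
        mul_le_mul_of_nonneg_left hA0 (mul_nonneg (mul_nonneg (by linarith) (by linarith)) (by linarith) : (0:ℝ) ≤ (p - 2) * ((k:ℝ) - 3) * (nj:ℝ))]
    nlinarith [mul_le_mul_of_nonneg_left hC (by linarith : (0:ℝ) ≤ (nj:ℝ))]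
  · nlinarith [mul_le_mul_of_nonneg_left hD (by linarith : (0:ℝ) ≤ (nj:ℝ)),
      mul_le_mul_of_nonneg_left hB0.le (mul_nonneg (by linarith) (by linarith) : (0:ℝ) ≤ ((k:ℝ) - 4) * (nj:ℝ)), hE]
end

section
/- Let k ≥ 5 be an integer, p ≥ 2 real, and nᵢ ≥ 2k, k ≤ nⱼ ≤ 2k-1 integers. Then (⌊k/2⌋-1)·((nᵢ+nⱼ-1)^p - (nᵢ-1)^p) + nⱼ·(⌊k/2⌋-1)^p > (nⱼ-k+2) + (k-3)^(p+1) + (nⱼ-1)^p. -/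
set_option maxHeartbeats 1000000

private lemma rpow_two' (x : ℝ) : x ^ (2:ℝ) = x * x := by
  rw [show (2:ℝ) = ((2:ℕ):ℝ) by norm_num, Real.rpow_natCast]; ring

private lemma rpow_three' (x : ℝ) : x ^ (3:ℝ) = x * x * x := by
  rw [show (3:ℝ) = ((3:ℕ):ℝ) by norm_num, Real.rpow_natCast]; ring

private lemma rsplit2 (x : ℝ) (hx : 0 < x) (p : ℝ) : x ^ p = x ^ (p-2) * (x*x) := by
  have h : x ^ p = x ^ (p-2) * x ^ (2:ℝ) := by rw [← Real.rpow_add hx]; congr 1; ring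
  rw [h, rpow_two']

private lemma rsplit3 (x : ℝ) (hx : 0 < x) (p : ℝ) : x ^ (p+1) = x ^ (p-2) * (x*x*x) := by
  have h : x ^ (p+1) = x ^ (p-2) * x ^ (3:ℝ) := by rw [← Real.rpow_add hx]; congr 1; ring
  rw [h, rpow_three']

theorem absorb_typeA (k ni nj : ℤ) (p : ℝ) (hk : 5 ≤ k) (hp : 2 ≤ p)
    (hni : 2 * k ≤ ni) (hnjl : k ≤ nj) (hnju : nj ≤ 2 * k - 1) :
    ((⌊(k : ℝ) / 2⌋ : ℝ) - 1) * (((ni : ℝ) + nj - 1) ^ p - ((ni : ℝ) - 1) ^ p)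
      + (nj : ℝ) * ((⌊(k : ℝ) / 2⌋ : ℝ) - 1) ^ p
      > ((nj : ℝ) - k + 2) + ((k : ℝ) - 3) ^ (p + 1) + ((nj : ℝ) - 1) ^ p := by
  have hc5 : (5:ℝ) ≤ (k:ℝ) := by exact_mod_cast hk
  have hmn : 2 * (k:ℝ) ≤ (ni:ℝ) := by exact_mod_cast hni
  have hnl : (k:ℝ) ≤ (nj:ℝ) := by exact_mod_cast hnjl
  have hnu : (nj:ℝ) ≤ 2 * (k:ℝ) - 1 := by exact_mod_cast hnju
  -- floor lower bound
  have hfl : (k:ℝ) - 1 ≤ 2 * (⌊(k : ℝ) / 2⌋ : ℝ) := by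
    have h1 : (k : ℝ) / 2 < (⌊(k : ℝ) / 2⌋ : ℝ) + 1 := Int.lt_floor_add_one _
    have h3 : k < 2 * ⌊(k : ℝ) / 2⌋ + 2 := by exact_mod_cast (by linarith : (k:ℝ) < 2 * (⌊(k : ℝ) / 2⌋ : ℝ) + 2)
    have h4 : k ≤ 2 * ⌊(k : ℝ) / 2⌋ + 1 := by omega
    have h5 : (k:ℝ) ≤ 2 * (⌊(k : ℝ) / 2⌋ : ℝ) + 1 := by exact_mod_cast h4
    linarith
  set t : ℝ := (⌊(k : ℝ) / 2⌋ : ℝ) - 1 with ht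
  set c : ℝ := (k : ℝ)
  set m : ℝ := (ni : ℝ)
  set n : ℝ := (nj : ℝ)
  have h2t : c - 3 ≤ 2 * t := by rw [ht]; linarith
  have ht1 : (1:ℝ) ≤ t := by linarith
  have hp2 : (0:ℝ) ≤ p - 2 := by linarith
  have hb : (0:ℝ) < m - 1 := by linarith
  have ha : (0:ℝ) < m + n - 1 := by linarith
  have hba : m - 1 ≤ m + n - 1 := by linarith
  have hk3 : (0:ℝ) < c - 3 := by linarith
  have hn1 : (0:ℝ) < n - 1 := by linarith
  have h2k1 : (0:ℝ) < 2*c - 1 := by linarith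
  set X : ℝ := (2*c - 1) ^ (p - 2) with hX
  have hX1 : (1:ℝ) ≤ X := by
    rw [hX]
    calc (1:ℝ) = 1 ^ (p-2) := (Real.one_rpow _).symm
    _ ≤ (2*c-1) ^ (p-2) := Real.rpow_le_rpow zero_le_one (by linarith) hp2
  have hXpos : (0:ℝ) < X := by linarith
  have hbX : X ≤ (m-1) ^ (p-2) := Real.rpow_le_rpow (le_of_lt h2k1) (by linarith) hp2
  have haB : (m-1) ^ (p-2) ≤ (m+n-1) ^ (p-2) := Real.rpow_le_rpow (le_of_lt hb) hba hp2
  have hBnn : (0:ℝ) ≤ (m-1) ^ (p-2) := Real.rpow_nonneg (le_of_lt hb) _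
  have hdiff : X * ((m+n-1)*(m+n-1) - (m-1)*(m-1)) ≤ (m+n-1) ^ p - (m-1) ^ p := by
    rw [rsplit2 _ ha, rsplit2 _ hb]
    have h1 : (m-1) ^ (p-2) * ((m+n-1)*(m+n-1)) ≤ (m+n-1) ^ (p-2) * ((m+n-1)*(m+n-1)) :=
      mul_le_mul_of_nonneg_right haB (by nlinarith)
    have h2 : X * ((m+n-1)*(m+n-1) - (m-1)*(m-1)) ≤ (m-1) ^ (p-2) * ((m+n-1)*(m+n-1) - (m-1)*(m-1)) :=
      mul_le_mul_of_nonneg_right hbX (by nlinarith)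

    nlinarith
  have hn1b : (n-1) ^ p ≤ X * ((2*c-2)*(2*c-2)) := by
    rw [rsplit2 _ hn1]
    have h1 : (n-1) ^ (p-2) ≤ X := Real.rpow_le_rpow (le_of_lt hn1) (by linarith) hp2
    exact mul_le_mul h1 (mul_le_mul (by linarith) (by linarith) (by linarith) (by linarith)) (mul_nonneg (by linarith) (by linarith)) (le_of_lt hXpos)
  have hk3b : (c-3) ^ (p+1) ≤ X * ((c-3)*(c-3)*(c-3)) := by
    rw [rsplit3 _ hk3]
    have h1 : (c-3) ^ (p-2) ≤ X := Real.rpow_le_rpow (le_of_lt hk3) (by linarith) hp2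
    exact mul_le_mul h1 le_rfl (by positivity) (le_of_lt hXpos)
  have htp : (1:ℝ) ≤ t ^ p := by
    calc (1:ℝ) = 1 ^ p := (Real.one_rpow _).symm
    _ ≤ t ^ p := Real.rpow_le_rpow zero_le_one ht1 (by linarith)
  have ht0 : (0:ℝ) ≤ t := by linarith
  have hpoly : (c-3)*(c-3)*(c-3) + (2*c-2)*(2*c-2) ≤ t * ((m+n-1)*(m+n-1) - (m-1)*(m-1)) := by
    nlinarith [mul_nonneg (mul_nonneg (by linarith : (0:ℝ) ≤ 2*t-(c-3)) (by linarith : (0:ℝ) ≤ n)) (by linarith : (0:ℝ) ≤ 2*m+n-2),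
      mul_nonneg (by linarith : (0:ℝ) ≤ n-c) (by linarith : (0:ℝ) ≤ 2*m+n-2),
      mul_nonneg (mul_nonneg (by linarith : (0:ℝ) ≤ c-3) (by linarith : (0:ℝ) ≤ n-c)) (by linarith : (0:ℝ) ≤ 2*m+n-2),
      mul_nonneg (mul_nonneg (by linarith : (0:ℝ) ≤ c-3) (by linarith : (0:ℝ) ≤ c)) (by linarith : (0:ℝ) ≤ m-2*c),
      mul_nonneg (mul_nonneg (by linarith : (0:ℝ) ≤ c-3) (by linarith : (0:ℝ) ≤ c-5)) (by linarith : (0:ℝ) ≤ c)]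
  have hmain : t * (X * ((m+n-1)*(m+n-1) - (m-1)*(m-1))) ≤ t * ((m+n-1) ^ p - (m-1) ^ p) :=
    mul_le_mul_of_nonneg_left hdiff ht0
  have hnt : n ≤ n * t ^ p := by nlinarith
  have hfinal : X * ((c-3)*(c-3)*(c-3) + (2*c-2)*(2*c-2)) ≤ X * (t * ((m+n-1)*(m+n-1) - (m-1)*(m-1))) :=
    mul_le_mul_of_nonneg_left hpoly (le_of_lt hXpos)
  have hsum : X * ((c-3)*(c-3)*(c-3)) + X * ((2*c-2)*(2*c-2)) ≤ t * ((m+n-1) ^ p - (m-1) ^ p) := by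
    calc X * ((c-3)*(c-3)*(c-3)) + X * ((2*c-2)*(2*c-2))
        = X * ((c-3)*(c-3)*(c-3) + (2*c-2)*(2*c-2)) := by ring
      _ ≤ X * (t * ((m+n-1)*(m+n-1) - (m-1)*(m-1))) := hfinal
      _ = t * (X * ((m+n-1)*(m+n-1) - (m-1)*(m-1))) := by ring
      _ ≤ t * ((m+n-1) ^ p - (m-1) ^ p) := hmain
  linarith [hsum, hnt, hn1b, hk3b]
end
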